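/- arXiv:0911.1331 — 4 statements merged into one kernel-verified Lean document; each statement's English description precedes it below -/
import Mathlib

section
/- (Putinar's Theorem) Let S = {g₁, …, g_s} ⊆ ℝ[X₁, …, Xₙ] and suppose the quadratic module M_S is archimedean, i.e., for every polynomial f ∈ ℝ[X₁, …, Xₙ] there exists N ∈ ℕ with N − f ∈ M_S. Then every f ∈ ℝ[X₁, …, Xₙ] with f(x) > 0 for all x ∈ K_S lies in M_S; that is, f = σ₀ + σ₁g₁ + ⋯ + σ_s g_s for some sums of squares σ₀, …, σ_s in ℝ[X₁, …, Xₙ]. -/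
/-!
If `f ∉ M_S`, the archimedean property gives a descent: from `t f - 1 ∈ M_S` with `t` a sum of
squares and `l + f ∈ M_S`, multiplying by `(1 - s t)²` and correcting with archimedean bounds
lowers `l` by a fixed amount, until `f ∈ M_S`. Hence `-1 ∉ M_S - Σ² f`, and Zorn's lemma
extends this to a maximal quadratic module `Q` avoiding `-1`; the same descent shows
`Q ∪ -Q = ℝ[X]`. Every `a` then defines a Dedekind cut `{r | r - a ∈ Q}` of `ℝ`, and its value
is an `ℝ`-algebra homomorphism, i.e. evaluation at a point `x`. It is nonnegative on `Q`, so
`x ∈ K_S` while `f(x) ≤ 0`.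
-/

open MvPolynomial Finset

/-- `f` is a sum of squares in a commutative ring. -/
def IsSOS {R : Type*} [CommRing R] (f : R) : Prop :=
  ∃ (k : ℕ) (p : Fin k → R), f = ∑ i, p i ^ 2

/-- `f` belongs to the quadratic module generated by `g₁, …, g_s`, i.e.
`f = σ₀ + σ₁ g₁ + ⋯ + σ_s g_s` with each `σᵢ` a sum of squares. -/
def InQuadraticModule {R : Type*} [CommRing R] {n s : ℕ}
    (g : Fin s → MvPolynomial (Fin n) R) (f : MvPolynomial (Fin n) R) : Prop :=
  ∃ (σ₀ : MvPolynomial (Fin n) R) (σ : Fin s → MvPolynomial (Fin n) R),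
    IsSOS σ₀ ∧ (∀ i, IsSOS (σ i)) ∧ f = σ₀ + ∑ i, σ i * g i

theorem isSOS_iff_isSumSq {R : Type*} [CommRing R] {f : R} : IsSOS f ↔ IsSumSq f := by
  refine ⟨fun ⟨k, p, hf⟩ => hf ▸ IsSumSq.sum_sq _ p, fun hf => ?_⟩
  induction hf with
  | zero => exact ⟨0, ![], by simp⟩
  | sq_add a _ ih =>
    obtain ⟨k, p, rfl⟩ := ih
    exact ⟨k + 1, Fin.cons a p, by simp [Fin.sum_univ_succ, sq]⟩

theorem exists_neg_mem_of_sub_mem {L : Set ℝ} {Λ δ : ℝ} (hδ : 0 < δ) (hΛ : Λ ∈ L)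
    (hstep : ∀ r ∈ L, 0 ≤ r → r ≤ Λ → r - δ ∈ L) : ∃ r ∈ L, r < 0 := by
  by_contra! hL
  have hmem (m : ℕ) : Λ - m * δ ∈ L := by
    induction m with
    | zero => simpa using hΛ
    | succ m ih =>
      convert hstep _ ih (hL _ ih) (by nlinarith [m.cast_nonneg (α := ℝ)]) using 1
      push_cast
      ring
  obtain ⟨m, hm⟩ := exists_nat_gt (Λ / δ)
  rw [div_lt_iff₀ hδ] at hm
  linarith [hL _ (hmem m)]

section QuadraticModule

variable {A : Type*} [CommRing A]

structure IsQuadraticModule (M : Set A) : Prop where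
  add_mem {a b : A} : a ∈ M → b ∈ M → a + b ∈ M
  sq_mem (a : A) : a ^ 2 ∈ M
  sq_mul_mem (a : A) {b : A} : b ∈ M → a ^ 2 * b ∈ M

def IsArchimedean (M : Set A) : Prop :=
  ∀ a : A, ∃ N : ℕ, (N : A) - a ∈ M

structure IsTotalArchimedean (Q : Set A) : Prop extends IsQuadraticModule Q where
  archimedean : IsArchimedean Q
  neg_one_notMem : (-1 : A) ∉ Q
  mem_or_neg_mem (a : A) : a ∈ Q ∨ -a ∈ Q

def adjoinNeg (M : Set A) (a : A) : Set A :=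
  {x | ∃ m ∈ M, ∃ t, IsSumSq t ∧ x = m - t * a}

variable {M : Set A}

theorem IsArchimedean.mono {Q : Set A} (hM : IsArchimedean M) (hMQ : M ⊆ Q) : IsArchimedean Q :=
  fun a => (hM a).imp fun _ hN => hMQ hN

theorem subset_adjoinNeg {a : A} : M ⊆ adjoinNeg M a :=
  fun m hm => ⟨m, hm, 0, .zero, by ring⟩

namespace IsQuadraticModule

variable (hM : IsQuadraticModule M)
include hM

theorem zero_mem : (0 : A) ∈ M := by
  simpa using hM.sq_mem 0

theorem one_mem : (1 : A) ∈ M := by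
  simpa using hM.sq_mem 1

theorem mem_of_isSumSq {s : A} (hs : IsSumSq s) : s ∈ M := by
  induction hs with
  | zero => exact hM.zero_mem
  | sq_add a _ ih => exact hM.add_mem (sq a ▸ hM.sq_mem a) ih

theorem adjoinNeg (a : A) : IsQuadraticModule (adjoinNeg M a) where
  add_mem := by
    rintro _ _ ⟨m₁, hm₁, t₁, ht₁, rfl⟩ ⟨m₂, hm₂, t₂, ht₂, rfl⟩
    exact ⟨m₁ + m₂, hM.add_mem hm₁ hm₂, t₁ + t₂, ht₁.add ht₂, by ring⟩
  sq_mem p := subset_adjoinNeg (hM.sq_mem p)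
  sq_mul_mem := by
    rintro p _ ⟨m, hm, t, ht, rfl⟩
    exact ⟨p ^ 2 * m, hM.sq_mul_mem p hm, p ^ 2 * t, (IsSquare.sq p).isSumSq.mul ht, by ring⟩

theorem neg_mem_adjoinNeg (a : A) : -a ∈ _root_.adjoinNeg M a :=
  ⟨0, hM.zero_mem, 1, .one, by ring⟩

omit hM in
theorem sUnion {c : Set (Set A)} (hc : ∀ M ∈ c, IsQuadraticModule M)
    (hchain : IsChain (· ⊆ ·) c) (hne : c.Nonempty) : IsQuadraticModule (⋃₀ c) where
  add_mem := by
    rintro a b ⟨M₁, hM₁, ha⟩ ⟨M₂, hM₂, hb⟩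
    rcases hchain.total hM₁ hM₂ with h | h
    · exact ⟨M₂, hM₂, (hc M₂ hM₂).add_mem (h ha) hb⟩
    · exact ⟨M₁, hM₁, (hc M₁ hM₁).add_mem ha (h hb)⟩
  sq_mem a := ⟨hne.some, hne.some_mem, (hc _ hne.some_mem).sq_mem a⟩
  sq_mul_mem := by
    rintro a b ⟨M, hM, hb⟩
    exact ⟨M, hM, (hc M hM).sq_mul_mem a hb⟩

theorem exists_maximal (h1 : (-1 : A) ∉ M) :
    ∃ Q, M ⊆ Q ∧ Maximal (fun Q => IsQuadraticModule Q ∧ (-1 : A) ∉ Q) Q := by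
  refine zorn_subset_nonempty _ (fun c hc hchain hne => ?_) M ⟨hM, h1⟩
  refine ⟨⋃₀ c, ⟨sUnion (fun M hM => (hc hM).1) hchain hne, ?_⟩,
    fun _ => Set.subset_sUnion_of_mem⟩
  rintro ⟨M, hM, h⟩
  exact (hc hM).2 h

end IsQuadraticModule

end QuadraticModule

section RealAlgebra

variable {A : Type*} [CommRing A] [Algebra ℝ A] {M Q : Set A}

theorem IsArchimedean.exists_algebraMap_sub_mem (hM : IsArchimedean M) (a : A) :
    ∃ r : ℝ, 0 ≤ r ∧ algebraMap ℝ A r - a ∈ M := by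
  obtain ⟨N, hN⟩ := hM a
  exact ⟨N, N.cast_nonneg, by simpa using hN⟩

namespace IsQuadraticModule

variable (hM : IsQuadraticModule M)
include hM

theorem algebraMap_mul_mem {c : ℝ} (hc : 0 ≤ c) {m : A} (hm : m ∈ M) :
    algebraMap ℝ A c * m ∈ M := by
  simpa [← map_pow, Real.sq_sqrt hc] using hM.sq_mul_mem (algebraMap ℝ A √c) hm

theorem algebraMap_mem {c : ℝ} (hc : 0 ≤ c) : algebraMap ℝ A c ∈ M := by
  simpa using hM.algebraMap_mul_mem hc hM.one_mem

theorem mem_of_algebraMap_mul_mem {c : ℝ} (hc : 0 < c) {m : A}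
    (h : algebraMap ℝ A c * m ∈ M) : m ∈ M := by
  simpa [← mul_assoc, ← map_mul, hc.ne'] using hM.algebraMap_mul_mem (inv_nonneg.2 hc.le) h

theorem nonneg_of_algebraMap_mem (h1 : (-1 : A) ∉ M) {c : ℝ} (h : algebraMap ℝ A c ∈ M) :
    0 ≤ c := by
  by_contra! hc
  apply h1
  simpa [← map_mul, hc.ne] using hM.algebraMap_mul_mem (inv_nonneg.2 (neg_nonneg.2 hc.le)) h

theorem algebraMap_sub_inv_add_mem {t a : A} (ht : IsSumSq t) (h : t * a - 1 ∈ M)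
    {κ γ ε l D : ℝ} (hκ : algebraMap ℝ A κ - t ∈ M)
    (hγ : algebraMap ℝ A γ - t * (t * a - 1) ∈ M) (hε : algebraMap ℝ A ε - t ^ 2 ∈ M)
    (hl : 0 ≤ l) (hD : 0 < D) (hlD : κ + γ + l * ε ≤ D) (hla : algebraMap ℝ A l + a ∈ M) :
    algebraMap ℝ A (l - D⁻¹) + a ∈ M := by
  set s := D⁻¹
  have hs : 0 ≤ s := by positivity
  let c (r : ℝ) : A := algebraMap ℝ A r
  -- the sum equals `l - 2s + s² D + a = l - s + a`
  have hsum : (1 - c s * t) ^ 2 * (c l + a) + c (2 * s) * (t * a - 1) + c (s ^ 2) * (c κ - t)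
      + c (s ^ 2) * (c γ - t * (t * a - 1)) + c (2 * l * s) * t + c (l * s ^ 2) * (c ε - t ^ 2)
      + c (s ^ 2 * (D - (κ + γ + l * ε))) ∈ M := by
    refine hM.add_mem (hM.add_mem (hM.add_mem (hM.add_mem (hM.add_mem (hM.add_mem
      (hM.sq_mul_mem _ hla) ?_) ?_) ?_) ?_) ?_) (hM.algebraMap_mem ?_)
    · exact hM.algebraMap_mul_mem (by positivity) h
    · exact hM.algebraMap_mul_mem (by positivity) hκ
    · exact hM.algebraMap_mul_mem (by positivity) hγ
    · exact hM.algebraMap_mul_mem (by positivity) (hM.mem_of_isSumSq ht)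
    · exact hM.algebraMap_mul_mem (by positivity) hε
    · exact mul_nonneg (by positivity) (sub_nonneg.2 hlD)
  convert hsum using 1
  have hsD : c s * c D = 1 := by rw [← map_mul, inv_mul_cancel₀ hD.ne', map_one]
  simp only [c, map_sub, map_add, map_mul, map_pow, map_ofNat] at hsD ⊢
  linear_combination -(algebraMap ℝ A s) * hsD

theorem mem_of_isSumSq_mul_sub_one_mem (harch : IsArchimedean M) {t a : A} (ht : IsSumSq t)
    (h : t * a - 1 ∈ M) : a ∈ M := by
  obtain ⟨Λ, hΛ, hΛa⟩ := harch.exists_algebraMap_sub_mem (-a)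
  obtain ⟨κ, hκ, hκt⟩ := harch.exists_algebraMap_sub_mem t
  obtain ⟨γ, hγ, hγt⟩ := harch.exists_algebraMap_sub_mem (t * (t * a - 1))
  obtain ⟨ε, hε, hεt⟩ := harch.exists_algebraMap_sub_mem (t ^ 2)
  -- lower `l` in `l + a ∈ M` by steps of `(κ + γ + Λ ε + 1)⁻¹`, starting from `Λ`
  obtain ⟨l, hla, hl⟩ := exists_neg_mem_of_sub_mem (L := {l | algebraMap ℝ A l + a ∈ M})
    (δ := (κ + γ + Λ * ε + 1)⁻¹) (by positivity) (by simpa using hΛa)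
    fun l hla hl hlΛ => hM.algebraMap_sub_inv_add_mem ht h hκt hγt hεt hl (by positivity)
      (by nlinarith) hla
  convert hM.add_mem (hM.algebraMap_mem (neg_nonneg.2 hl.le)) hla using 1
  rw [map_neg]
  ring

theorem mem_of_neg_one_mem_adjoinNeg (harch : IsArchimedean M) {a : A}
    (h : (-1 : A) ∈ _root_.adjoinNeg M a) : a ∈ M := by
  obtain ⟨m, hm, t, ht, hmt⟩ := h
  exact hM.mem_of_isSumSq_mul_sub_one_mem harch ht (by convert hm using 1; linear_combination hmt)

end IsQuadraticModule

theorem IsTotalArchimedean.of_maximal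
    (hQ : Maximal (fun Q => IsQuadraticModule Q ∧ (-1 : A) ∉ Q) Q) (harch : IsArchimedean Q) :
    IsTotalArchimedean Q where
  toIsQuadraticModule := hQ.prop.1
  archimedean := harch
  neg_one_notMem := hQ.prop.2
  mem_or_neg_mem a := by
    refine or_iff_not_imp_right.2 fun ha => hQ.prop.1.mem_of_neg_one_mem_adjoinNeg harch ?_
    by_contra h1
    have := hQ.eq_of_subset ⟨hQ.prop.1.adjoinNeg a, h1⟩ subset_adjoinNeg
    exact ha (this ▸ hQ.prop.1.neg_mem_adjoinNeg a)

/-- `c` is the Dedekind cut that `a` defines in `ℝ` when `Q` is read as the set of nonnegative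
elements. -/
def IsCut (Q : Set A) (a : A) (c : ℝ) : Prop :=
  (∀ r, c < r → algebraMap ℝ A r - a ∈ Q) ∧ ∀ r < c, a - algebraMap ℝ A r ∈ Q

namespace IsCut

variable {a b : A} {c d : ℝ}

theorem le (hQ : IsQuadraticModule Q) (h1 : (-1 : A) ∉ Q) (hc : IsCut Q a c)
    (hd : IsCut Q a d) : d ≤ c := by
  by_contra! hcd
  obtain ⟨r₁, hcr₁, hr₁d⟩ := exists_between hcd
  obtain ⟨r₂, hr₁₂, hr₂d⟩ := exists_between hr₁d
  have := hQ.nonneg_of_algebraMap_mem h1 (c := r₁ - r₂) <| by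
    convert hQ.add_mem (hc.1 r₁ hcr₁) (hd.2 r₂ hr₂d) using 1
    rw [map_sub]
    ring
  linarith

theorem eq (hQ : IsQuadraticModule Q) (h1 : (-1 : A) ∉ Q) (hc : IsCut Q a c)
    (hd : IsCut Q a d) : c = d :=
  le_antisymm (hd.le hQ h1 hc) (hc.le hQ h1 hd)

theorem nonneg (hQ : IsQuadraticModule Q) (h1 : (-1 : A) ∉ Q) (hc : IsCut Q a c)
    (ha : a ∈ Q) : 0 ≤ c := by
  by_contra! hc0
  obtain ⟨r, hcr, hr⟩ := exists_between hc0
  have := hQ.nonneg_of_algebraMap_mem h1 (by simpa using hQ.add_mem (hc.1 r hcr) ha)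
  linarith

theorem neg (hc : IsCut Q a c) : IsCut Q (-a) (-c) :=
  ⟨fun r hr => by simpa [sub_eq_add_neg, add_comm] using hc.2 (-r) (by linarith),
    fun r hr => by simpa [sub_eq_add_neg, add_comm] using hc.1 (-r) (by linarith)⟩

theorem add (hQ : IsQuadraticModule Q) (hc : IsCut Q a c) (hd : IsCut Q b d) :
    IsCut Q (a + b) (c + d) := by
  refine ⟨fun r hr => ?_, fun r hr => ?_⟩
  · convert hQ.add_mem (hc.1 (c + (r - c - d) / 2) (by linarith))
      (hd.1 (d + (r - c - d) / 2) (by linarith)) using 1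
    rw [← add_sub_add_comm, ← map_add]
    ring_nf
  · convert hQ.add_mem (hc.2 (c - (c + d - r) / 2) (by linarith))
      (hd.2 (d - (c + d - r) / 2) (by linarith)) using 1
    rw [← add_sub_add_comm, ← map_add]
    ring_nf

theorem sq_of_nonneg (hQ : IsQuadraticModule Q) (hc : IsCut Q a c) (hc0 : 0 ≤ c) :
    IsCut Q (a ^ 2) (c ^ 2) := by
  refine ⟨fun r hr => ?_, fun r hr => ?_⟩
  · obtain ⟨s, hcs, hsr⟩ := exists_between ((Real.lt_sqrt hc0).2 hr)
    have hs : 0 < s := hc0.trans_lt hcs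
    have hsub : algebraMap ℝ A s - a ∈ Q := hc.1 s hcs
    have hadd : algebraMap ℝ A s + a ∈ Q := by simpa using hc.neg.1 s (by linarith)
    -- `(s - a)²(s + a) + (s + a)²(s - a) = 2s (s² - a²)`
    have hsq : algebraMap ℝ A (s ^ 2) - a ^ 2 ∈ Q := by
      refine hQ.mem_of_algebraMap_mul_mem (c := 2 * s) (by positivity) ?_
      convert hQ.add_mem (hQ.sq_mul_mem (algebraMap ℝ A s - a) hadd)
        (hQ.sq_mul_mem (algebraMap ℝ A s + a) hsub) using 1
      simp only [map_mul, map_pow, map_ofNat]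
      ring
    convert hQ.add_mem (hQ.algebraMap_mem (sub_nonneg.2 ((Real.lt_sqrt hs.le).1 hsr).le)) hsq
      using 1
    rw [map_sub]
    ring
  · rcases lt_or_ge r 0 with hr0 | hr0
    · simpa [sub_eq_add_neg] using
        hQ.add_mem (hQ.sq_mem a) (hQ.algebraMap_mem (neg_nonneg.2 hr0.le))
    have hc_pos : 0 < c := by nlinarith
    obtain ⟨s, hrs, hsc⟩ := exists_between ((Real.sqrt_lt' hc_pos).2 hr)
    have hs : 0 < s := (Real.sqrt_nonneg r).trans_lt hrs
    -- `a² - r = (a - s)² + 2s (a - s) + (s² - r)`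
    convert hQ.add_mem (hQ.add_mem (hQ.sq_mem (a - algebraMap ℝ A s))
      (hQ.algebraMap_mul_mem (c := 2 * s) (by positivity) (hc.2 s hsc)))
      (hQ.algebraMap_mem (sub_nonneg.2 ((Real.sqrt_lt' hs).1 hrs).le)) using 1
    simp only [map_sub, map_mul, map_pow, map_ofNat]
    ring

theorem sq (hQ : IsQuadraticModule Q) (hc : IsCut Q a c) : IsCut Q (a ^ 2) (c ^ 2) := by
  rcases le_total 0 c with hc0 | hc0
  · exact hc.sq_of_nonneg hQ hc0
  · simpa using hc.neg.sq_of_nonneg hQ (neg_nonneg.2 hc0)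

end IsCut

theorem isCut_algebraMap (hQ : IsQuadraticModule Q) (c : ℝ) : IsCut Q (algebraMap ℝ A c) c :=
  ⟨fun r hr => by simpa using hQ.algebraMap_mem (sub_nonneg.2 hr.le),
    fun r hr => by simpa using hQ.algebraMap_mem (sub_nonneg.2 hr.le)⟩

noncomputable def cutValue (Q : Set A) (a : A) : ℝ :=
  sInf {r | algebraMap ℝ A r - a ∈ Q}

namespace IsTotalArchimedean

variable (hQ : IsTotalArchimedean Q)
include hQ

theorem isCut_cutValue (a : A) : IsCut Q a (cutValue Q a) := by
  obtain ⟨N, -, hN⟩ := hQ.archimedean.exists_algebraMap_sub_mem a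
  have hne : {r | algebraMap ℝ A r - a ∈ Q}.Nonempty := ⟨N, hN⟩
  have hbdd : BddBelow {r | algebraMap ℝ A r - a ∈ Q} := by
    obtain ⟨N', -, hN'⟩ := hQ.archimedean.exists_algebraMap_sub_mem (-a)
    refine ⟨-N', fun r hr => ?_⟩
    have := hQ.nonneg_of_algebraMap_mem hQ.neg_one_notMem (c := r + N') <| by
      convert hQ.add_mem hr hN' using 1
      rw [map_add]
      ring
    linarith
  refine ⟨fun r hr => ?_, fun r hr => ?_⟩
  · obtain ⟨u, hu, hur⟩ := exists_lt_of_csInf_lt hne hr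
    convert hQ.add_mem (hQ.algebraMap_mem (sub_nonneg.2 hur.le)) hu using 1
    rw [map_sub]
    ring
  · simpa using (hQ.mem_or_neg_mem (algebraMap ℝ A r - a)).resolve_left
      (show r ∉ {r | algebraMap ℝ A r - a ∈ Q} from notMem_of_lt_csInf hr hbdd)

theorem cutValue_eq {a : A} {c : ℝ} (h : IsCut Q a c) : cutValue Q a = c :=
  (hQ.isCut_cutValue a).eq hQ.toIsQuadraticModule hQ.neg_one_notMem h

theorem cutValue_mul (a b : A) : cutValue Q (a * b) = cutValue Q a * cutValue Q b := by
  have hQM := hQ.toIsQuadraticModule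
  have ha := hQ.isCut_cutValue a
  have hb := hQ.isCut_cutValue b
  have hab := hQ.isCut_cutValue (a * b)
  have h := ((hab.add hQM hab).add hQM (ha.sq hQM)).add hQM (hb.sq hQM)
  rw [show a * b + a * b + a ^ 2 + b ^ 2 = (a + b) ^ 2 by ring] at h
  have := ((ha.add hQM hb).sq hQM).eq hQM hQ.neg_one_notMem h
  linarith

noncomputable def character : A →ₐ[ℝ] ℝ where
  toFun := cutValue Q
  map_one' := by simpa using hQ.cutValue_eq (isCut_algebraMap hQ.toIsQuadraticModule 1)
  map_mul' := hQ.cutValue_mul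
  map_zero' := by simpa using hQ.cutValue_eq (isCut_algebraMap hQ.toIsQuadraticModule 0)
  map_add' a b :=
    hQ.cutValue_eq ((hQ.isCut_cutValue a).add hQ.toIsQuadraticModule (hQ.isCut_cutValue b))
  commutes' c := hQ.cutValue_eq (isCut_algebraMap hQ.toIsQuadraticModule c)

theorem character_nonneg {a : A} (ha : a ∈ Q) : 0 ≤ hQ.character a :=
  (hQ.isCut_cutValue a).nonneg hQ.toIsQuadraticModule hQ.neg_one_notMem ha

end IsTotalArchimedean

theorem IsQuadraticModule.mem_of_forall_algHom_pos (hM : IsQuadraticModule M)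
    (harch : IsArchimedean M) {a : A} (ha : ∀ φ : A →ₐ[ℝ] ℝ, (∀ m ∈ M, 0 ≤ φ m) → 0 < φ a) :
    a ∈ M := by
  by_contra haM
  obtain ⟨Q, hMQ, hQ⟩ := (hM.adjoinNeg a).exists_maximal
    fun h => haM (hM.mem_of_neg_one_mem_adjoinNeg harch h)
  have hQ' := IsTotalArchimedean.of_maximal hQ (harch.mono (subset_adjoinNeg.trans hMQ))
  have hpos := ha hQ'.character fun m hm => hQ'.character_nonneg (hMQ (subset_adjoinNeg hm))
  have hneg := hQ'.character_nonneg (hMQ (hM.neg_mem_adjoinNeg a))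
  rw [map_neg] at hneg
  linarith

end RealAlgebra

section Generated

variable {R : Type*} [CommRing R] {n s : ℕ} (g : Fin s → MvPolynomial (Fin n) R)

theorem isQuadraticModule_inQuadraticModule : IsQuadraticModule {f | InQuadraticModule g f} where
  add_mem := by
    rintro _ _ ⟨σ₀, σ, hσ₀, hσ, rfl⟩ ⟨τ₀, τ, hτ₀, hτ, rfl⟩
    refine ⟨σ₀ + τ₀, σ + τ, ?_, fun i => ?_, ?_⟩
    · exact isSOS_iff_isSumSq.2 ((isSOS_iff_isSumSq.1 hσ₀).add (isSOS_iff_isSumSq.1 hτ₀))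
    · exact isSOS_iff_isSumSq.2 ((isSOS_iff_isSumSq.1 (hσ i)).add (isSOS_iff_isSumSq.1 (hτ i)))
    · simp only [Pi.add_apply, add_mul, sum_add_distrib]
      ring
  sq_mem p := ⟨p ^ 2, 0, isSOS_iff_isSumSq.2 (IsSquare.sq p).isSumSq,
    fun _ => isSOS_iff_isSumSq.2 .zero, by simp⟩
  sq_mul_mem := by
    rintro p _ ⟨σ₀, σ, hσ₀, hσ, rfl⟩
    refine ⟨p ^ 2 * σ₀, p ^ 2 • σ, ?_, fun i => ?_, ?_⟩
    · exact isSOS_iff_isSumSq.2 ((IsSquare.sq p).isSumSq.mul (isSOS_iff_isSumSq.1 hσ₀))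
    · exact isSOS_iff_isSumSq.2 ((IsSquare.sq p).isSumSq.mul (isSOS_iff_isSumSq.1 (hσ i)))
    · simp only [Pi.smul_apply, smul_eq_mul, mul_add, mul_sum, mul_assoc]

theorem inQuadraticModule_self (i : Fin s) : InQuadraticModule g (g i) := by
  refine ⟨0, Pi.single i 1, isSOS_iff_isSumSq.2 .zero, fun j => isSOS_iff_isSumSq.2 ?_,
    by simp [Pi.single_apply]⟩
  rcases eq_or_ne j i with rfl | h
  · simp [IsSumSq.one]
  · simp [h, IsSumSq.zero]

end Generated

/-- **Putinar's Theorem.** If the quadratic module `M_S` generated by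
`g₁, …, g_s ∈ ℝ[X]` is archimedean (for every `p` there is `N ∈ ℕ` with
`N - p ∈ M_S`), then every `f` strictly positive on `K_S` lies in `M_S`. -/
theorem putinar (n s : ℕ) (g : Fin s → MvPolynomial (Fin n) ℝ)
    (harch : ∀ p : MvPolynomial (Fin n) ℝ, ∃ N : ℕ,
      InQuadraticModule g ((N : MvPolynomial (Fin n) ℝ) - p))
    (f : MvPolynomial (Fin n) ℝ)
    (hf : ∀ x : Fin n → ℝ, (∀ i, 0 ≤ eval x (g i)) → 0 < eval x f) :
    InQuadraticModule g f := by
  refine (isQuadraticModule_inQuadraticModule g).mem_of_forall_algHom_pos harch fun φ hφ => ?_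
  rw [aeval_unique φ] at hφ ⊢
  exact hf _ fun i => hφ _ (inQuadraticModule_self g i)
end

section
/- (Pólya's Theorem with rational coefficients) Let F ∈ ℚ[Y₁, …, Y_m] be a homogeneous polynomial with F(y) > 0 for all y ∈ [0,∞)^m \ {0}. Then there exists k ∈ ℕ such that (Y₁ + ⋯ + Y_m)^k · F has only nonnegative (rational) coefficients. -/
/-!
Write `N = k + d`. For `|μ| = N`, the coefficient of `Y^μ` in `(∑ Yᵢ)^k F`, multiplied by `μ!`,
is `k! ∑_b F_b ∏ᵢ μᵢ(μᵢ - 1)⋯(μᵢ - bᵢ + 1)`. Rescaling by `N`, the sum is `N^d` times the value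
of `F` at the point `t = μ / N` of the standard simplex, computed with every power `tᵢ^bᵢ`
replaced by the falling power `∏_{j < bᵢ} (tᵢ - j / N)`. These differ from the true powers by
`O(d² / N)` uniformly on the simplex, where `F` is bounded below by some `ε > 0` by compactness,
so for large `k` every coefficient is nonnegative.
-/

open MvPolynomial Finset Filter Nat

section FallingPow

variable {R : Type*} [CommRing R]

def fallingPow (h x : R) (n : ℕ) : R :=
  ∏ j ∈ range n, (x - j * h)

theorem fallingPow_one_natCast (a n : ℕ) : fallingPow (1 : R) a n = a.descFactorial n := by
  rw [← descPochhammer_eval_eq_descFactorial, descPochhammer_eval_eq_prod_range, fallingPow]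
  simp only [mul_one]

theorem fallingPow_mul_mul (c h x : R) (n : ℕ) :
    fallingPow (c * h) (c * x) n = c ^ n * fallingPow h x n := by
  simp only [fallingPow, mul_left_comm _ c, ← mul_sub, prod_mul_distrib, prod_const, card_range]

end FallingPow

theorem abs_prod_sub_prod_le {ι R : Type*} [CommRing R] [LinearOrder R] [IsStrictOrderedRing R]
    (s : Finset ι) {f g : ι → R} (hf : ∀ i ∈ s, |f i| ≤ 1) (hg : ∀ i ∈ s, |g i| ≤ 1) :
    |∏ i ∈ s, f i - ∏ i ∈ s, g i| ≤ ∑ i ∈ s, |f i - g i| := by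
  induction s using Finset.cons_induction with
  | empty => simp
  | cons a s _ ih =>
    simp only [forall_mem_cons] at hf hg
    have hgs : |∏ i ∈ s, g i| ≤ 1 := by
      rw [abs_prod]; exact prod_le_one (fun i _ => abs_nonneg _) hg.2
    rw [prod_cons, prod_cons, sum_cons]
    calc |f a * ∏ i ∈ s, f i - g a * ∏ i ∈ s, g i|
        = |f a * (∏ i ∈ s, f i - ∏ i ∈ s, g i) + (f a - g a) * ∏ i ∈ s, g i| := by ring_nf
      _ ≤ |f a| * |∏ i ∈ s, f i - ∏ i ∈ s, g i| + |f a - g a| * |∏ i ∈ s, g i| := by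
        rw [← abs_mul, ← abs_mul]; exact abs_add_le _ _
      _ ≤ 1 * ∑ i ∈ s, |f i - g i| + |f a - g a| * 1 := by
        gcongr
        · exact hf.1
        · exact ih hf.2 hg.2
      _ = |f a - g a| + ∑ i ∈ s, |f i - g i| := by ring

theorem MvPolynomial.IsHomogeneous.degree_eq_of_mem_support {σ R : Type*} [CommSemiring R]
    {F : MvPolynomial σ R} {d : ℕ} (hF : F.IsHomogeneous d) {b : σ →₀ ℕ} (hb : b ∈ F.support) :
    b.degree = d := by
  rw [Finsupp.degree_eq_weight_one]; exact hF (mem_support_iff.1 hb)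

section

variable {σ : Type*} [Fintype σ]

theorem abs_prod_fallingPow_sub_prod_pow_le {h : ℝ} {x : σ → ℝ}
    (hx : ∀ i, x i ∈ Set.Icc 0 1) (b : σ →₀ ℕ) (h0 : 0 ≤ h) (hb : b.degree * h ≤ 1) :
    |∏ i, fallingPow h (x i) (b i) - ∏ i, x i ^ b i| ≤ b.degree * (b.degree * h) := by
  set s := univ.sigma fun i => range (b i)
  have hs : (s.card : ℝ) = b.degree := by simp [s, Finsupp.degree_eq_sum]
  have hj : ∀ p ∈ s, (p.2 : ℝ) * h ≤ b.degree * h := fun p hp => by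
    have hlt : p.2 < b p.1 := mem_range.1 (mem_sigma.1 hp).2
    have hle : b p.1 ≤ b.degree := by
      rw [Finsupp.degree_eq_sum]; exact single_le_sum (fun _ _ => Nat.zero_le _) (mem_univ _)
    gcongr; exact_mod_cast (by omega : p.2 ≤ b.degree)
  have hfalling : ∏ i, fallingPow h (x i) (b i) = ∏ p ∈ s, (x p.1 - p.2 * h) := by
    simp only [fallingPow, s, prod_sigma]
  have hpow : ∏ i, x i ^ b i = ∏ p ∈ s, x p.1 := by simp [s, prod_sigma]
  rw [hfalling, hpow]
  calc _ ≤ ∑ p ∈ s, |(x p.1 - p.2 * h) - x p.1| := by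
        refine abs_prod_sub_prod_le s (fun p hp => ?_) (fun p _ => ?_)
        · have hjh : 0 ≤ (p.2 : ℝ) * h := by positivity
          rw [abs_le]; constructor <;> linarith [hj p hp, (hx p.1).1, (hx p.1).2]
        · rw [abs_le]; constructor <;> linarith [(hx p.1).1, (hx p.1).2]
    _ ≤ ∑ _p ∈ s, (b.degree * h : ℝ) := by
        refine sum_le_sum fun p hp => ?_
        rw [sub_sub_cancel_left, abs_neg, abs_of_nonneg (by positivity)]
        exact hj p hp
    _ = _ := by rw [sum_const, nsmul_eq_mul, hs]

def fallingEval {R : Type*} [CommRing R] (h : R) (x : σ → R) (F : MvPolynomial σ R) : R :=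
  ∑ b ∈ F.support, F.coeff b * ∏ i, fallingPow h (x i) (b i)

theorem fallingEval_mul_smul {R : Type*} [CommRing R] {F : MvPolynomial σ R} {d : ℕ}
    (hF : F.IsHomogeneous d) (c h : R) (x : σ → R) :
    fallingEval (c * h) (c • x) F = c ^ d * fallingEval h x F := by
  rw [fallingEval, fallingEval, mul_sum]
  refine sum_congr rfl fun b hb => ?_
  simp only [Pi.smul_apply, smul_eq_mul, fallingPow_mul_mul, prod_mul_distrib,
    prod_pow_eq_pow_sum, ← Finsupp.degree_eq_sum, hF.degree_eq_of_mem_support hb]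
  ring

theorem abs_fallingEval_sub_eval_le {F : MvPolynomial σ ℝ} {d : ℕ} (hF : F.IsHomogeneous d)
    {h : ℝ} {x : σ → ℝ} (hx : ∀ i, x i ∈ Set.Icc 0 1) (h0 : 0 ≤ h) (hd : d * h ≤ 1) :
    |fallingEval h x F - eval x F| ≤ (∑ b ∈ F.support, |F.coeff b|) * (d * (d * h)) := by
  rw [fallingEval, eval_eq', ← sum_sub_distrib, sum_mul]
  refine (abs_sum_le_sum_abs _ _).trans (sum_le_sum fun b hb => ?_)
  have hb := hF.degree_eq_of_mem_support hb
  rw [← mul_sub, abs_mul]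
  gcongr
  exact hb ▸ abs_prod_fallingPow_sub_prod_pow_le hx b h0 (hb ▸ hd)

theorem prod_factorial_mul_coeff_sum_X_pow_mul_monomial {R : Type*} [CommSemiring R] {k : ℕ}
    {μ b : σ →₀ ℕ} (hμ : μ.degree = k + b.degree) (a : R) :
    (∏ i, ((μ i)! : R)) * coeff μ ((∑ i, X i) ^ k * monomial b a)
      = k ! * (a * ∏ i, ((μ i).descFactorial (b i) : R)) := by
  rw [coeff_mul_monomial']
  split_ifs with hb
  · have hk : (μ - b).degree = k := by
      have := congrArg Finsupp.degree (tsub_add_cancel_of_le hb)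
      rw [map_add] at this; omega
    have hnat : (∏ i, (μ i)!) * (μ - b).multinomial = k ! * ∏ i, (μ i).descFactorial (b i) := by
      rw [Finsupp.multinomial_eq_of_support_subset (subset_univ _)]
      calc _ = (∏ i, ((μ - b) i)!) * Nat.multinomial univ (μ - b)
              * ∏ i, (μ i).descFactorial (b i) := by
            rw [mul_right_comm, ← prod_mul_distrib]
            congr 2; ext i
            rw [Finsupp.tsub_apply, factorial_mul_descFactorial (hb i)]
        _ = _ := by rw [Nat.multinomial_spec, ← Finsupp.degree_eq_sum, hk]
    rw [coeff_sum_X_pow_of_fintype, if_pos (show (μ - b).sum (fun _ m => m) = k from hk)]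
    have hR : (∏ i, ((μ i)! : R)) * ((μ - b).multinomial : R)
        = k ! * ∏ i, ((μ i).descFactorial (b i) : R) := by
      simpa using congrArg (Nat.cast : ℕ → R) hnat
    calc _ = a * ((∏ i, ((μ i)! : R)) * ((μ - b).multinomial : R)) := by ring
      _ = _ := by rw [hR]; ring
  · obtain ⟨i, hi⟩ : ∃ i, μ i < b i := by
      by_contra! h; exact hb fun i => h i
    have hzero : ((μ i).descFactorial (b i) : R) = 0 := by
      rw [descFactorial_eq_zero_iff_lt.2 hi, Nat.cast_zero]
    rw [mul_zero, prod_eq_zero (mem_univ i) hzero, mul_zero, mul_zero]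

theorem prod_factorial_mul_coeff_sum_X_pow_mul {R : Type*} [CommRing R] {F : MvPolynomial σ R}
    {d k : ℕ} (hF : F.IsHomogeneous d) {μ : σ →₀ ℕ} (hμ : μ.degree = k + d) :
    (∏ i, ((μ i)! : R)) * coeff μ ((∑ i, X i) ^ k * F)
      = k ! * fallingEval 1 (fun i => (μ i : R)) F := by
  conv_lhs => rw [F.as_sum]
  rw [mul_sum, coeff_sum, mul_sum, fallingEval, mul_sum]
  refine sum_congr rfl fun b hb => ?_
  rw [prod_factorial_mul_coeff_sum_X_pow_mul_monomial
    (hμ.trans (by rw [hF.degree_eq_of_mem_support hb]))]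
  simp only [fallingPow_one_natCast]

theorem exists_pos_le_eval_on_stdSimplex {F : MvPolynomial σ ℝ}
    (hpos : ∀ y : σ → ℝ, (∀ i, 0 ≤ y i) → y ≠ 0 → 0 < eval y F) :
    ∃ ε > 0, ∀ t ∈ stdSimplex ℝ σ, ε ≤ eval t F :=
  (isCompact_stdSimplex ℝ σ).exists_forall_le' (continuous_eval F).continuousOn fun t ht =>
    hpos t ht.1 fun h0 => by simpa [h0] using ht.2

theorem eventually_nonneg_coeff_sum_X_pow_mul {F : MvPolynomial σ ℝ} {d : ℕ}
    (hF : F.IsHomogeneous d) (hpos : ∀ y : σ → ℝ, (∀ i, 0 ≤ y i) → y ≠ 0 → 0 < eval y F) :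
    ∀ᶠ k in atTop, ∀ μ, 0 ≤ coeff μ ((∑ i, X i) ^ k * F) := by
  obtain ⟨ε, hε, hFε⟩ := exists_pos_le_eval_on_stdSimplex hpos
  set C := ∑ b ∈ F.support, |F.coeff b|
  filter_upwards [tendsto_natCast_atTop_atTop.eventually_gt_atTop (C * d * d / ε)] with k hk μ
  have hX : (∑ i, X i : MvPolynomial σ ℝ).IsHomogeneous 1 :=
    IsHomogeneous.sum _ _ _ fun i _ => isHomogeneous_X ℝ i
  by_cases hμ : μ.degree = k + d
  swap
  · rw [((hX.pow k).mul hF).coeff_eq_zero (by rwa [one_mul])]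
  set N : ℝ := k + d
  have hC : 0 ≤ C := sum_nonneg fun _ _ => abs_nonneg _
  have hN : 0 < N :=
    add_pos_of_pos_of_nonneg ((div_nonneg (by positivity) hε.le).trans_lt hk) d.cast_nonneg
  have hCN : C * d * d < ε * N := by
    rw [div_lt_iff₀ hε] at hk; nlinarith [(d.cast_nonneg : (0:ℝ) ≤ d)]
  set t : σ → ℝ := fun i => μ i / N
  have ht : t ∈ stdSimplex ℝ σ := by
    refine ⟨fun i => by positivity, ?_⟩
    rw [← sum_div, div_eq_one_iff_eq hN.ne', ← Nat.cast_sum, ← Finsupp.degree_eq_sum, hμ]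
    push_cast; rfl
  have hG : 0 ≤ fallingEval N⁻¹ t F := by
    have hdN : d * N⁻¹ ≤ 1 := by rw [mul_inv_le_iff₀ hN]; simp [N]
    have hclose :=
      abs_fallingEval_sub_eval_le hF (mem_Icc_of_mem_stdSimplex ht) (by positivity) hdN
    have hCN' : C * (d * (d * N⁻¹)) < ε := by
      rw [← mul_assoc, ← mul_assoc, mul_inv_lt_iff₀ hN]; linarith
    linarith [hFε t ht, neg_abs_le (fallingEval N⁻¹ t F - eval t F)]
  have key := prod_factorial_mul_coeff_sum_X_pow_mul (R := ℝ) hF hμ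
  have hμt : (fun i => (μ i : ℝ)) = N • t := by
    ext i; simp only [Pi.smul_apply, smul_eq_mul, t]; field_simp
  rw [hμt, ← mul_inv_cancel₀ hN.ne', fallingEval_mul_smul hF] at key
  exact nonneg_of_mul_nonneg_right (by rw [key]; positivity) (by positivity)

end

/-- **Pólya's Theorem with rational coefficients.** If `F ∈ ℚ[Y₁, …, Y_m]` is
homogeneous and strictly positive on the nonnegative orthant minus the origin,
then for some `k ∈ ℕ` the polynomial `(Y₁ + ⋯ + Y_m)^k ⬝ F` has only nonnegative
(rational) coefficients. -/
theorem polya_rational (m d : ℕ) (F : MvPolynomial (Fin m) ℚ)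
    (hhom : F.IsHomogeneous d)
    (hpos : ∀ y : Fin m → ℝ, (∀ i, 0 ≤ y i) → y ≠ 0 → 0 < aeval y F) :
    ∃ k : ℕ, ∀ μ : Fin m →₀ ℕ, 0 ≤ ((∑ i, X i) ^ k * F).coeff μ := by
  have hposℝ : ∀ y : Fin m → ℝ, (∀ i, 0 ≤ y i) → y ≠ 0 → 0 < eval y (F.map (algebraMap ℚ ℝ)) :=
    fun y hy0 hy => by rw [eval_map, ← aeval_def]; exact hpos y hy0 hy
  obtain ⟨k, hk⟩ := (eventually_nonneg_coeff_sum_X_pow_mul (hhom.map _) hposℝ).exists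
  refine ⟨k, fun μ => ?_⟩
  have hmap : (∑ i, X i) ^ k * F.map (algebraMap ℚ ℝ)
      = ((∑ i, X i) ^ k * F).map (algebraMap ℚ ℝ) := by
    simp only [map_mul, map_pow, map_sum, map_X]
  have := hk μ
  rwa [hmap, coeff_map, eq_ratCast, Rat.cast_nonneg] at this
end

section
/- (Rational version of Schweighofer's key lemma) Let S = {g₁, …, g_s} ⊆ ℚ[X₁, …, Xₙ], let C ⊆ ℝⁿ be a compact set with K_S ⊆ C and g_i(x) ≤ 1 for all x ∈ C and all i, and let f ∈ ℚ[X₁, …, Xₙ] satisfy f(x) > 0 for all x ∈ K_S. Then there exist a rational number λ > 0 and k ∈ ℕ such that f(x) − λ·Σ_{i=1}^s (g_i(x) − 1)^{2k} g_i(x) > 0 for all x ∈ C. -/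
open MvPolynomial Finset

private lemma schw_cont {n : ℕ} (p : MvPolynomial (Fin n) ℚ) :
    Continuous fun x : Fin n → ℝ => aeval x p := by
  have : (fun x : Fin n → ℝ => aeval x p)
      = fun x => eval x (map (algebraMap ℚ ℝ) p) := by
    funext x
    rw [aeval_def, eval₂_eq_eval_map]
  rw [this]
  exact MvPolynomial.continuous_eval _

private lemma schw_bound_one (k : ℕ) {t : ℝ} (ht : t ≤ 1) :
    (t - 1) ^ (2 * k) * t ≤ 1 := by
  rcases le_or_gt t 0 with h | h
  · have h1 : (0:ℝ) ≤ (t - 1) ^ (2 * k) := by rw [pow_mul]; positivity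
    nlinarith
  · have h1 : (t - 1) ^ (2 * k) = (1 - t) ^ (2 * k) := by
      rw [show t - 1 = -(1 - t) by ring, Even.neg_pow (even_two_mul k)]
    have h2 : (1 - t) ^ (2 * k) ≤ 1 ^ (2 * k) :=
      pow_le_pow_left₀ (by linarith) (by linarith) _
    simp only [one_pow] at h2
    nlinarith [pow_nonneg (show (0:ℝ) ≤ 1 - t by linarith) (2 * k)]

private lemma schw_bound_small {k : ℕ} (hk : 1 ≤ k) {t : ℝ} (ht : t ≤ 1) :
    (t - 1) ^ (2 * k) * t ≤ 1 / (2 * k) := by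
  have hkpos : (0:ℝ) < 2 * k := by positivity
  rcases le_or_gt t 0 with h | h
  · have h1 : (0:ℝ) ≤ (t - 1) ^ (2 * k) := by rw [pow_mul]; positivity
    have : (t - 1) ^ (2 * k) * t ≤ 0 := mul_nonpos_of_nonneg_of_nonpos h1 h
    have : (0:ℝ) ≤ 1 / (2 * k) := by positivity
    linarith
  · have h1 : (t - 1) ^ (2 * k) = (1 - t) ^ (2 * k) := by
      rw [show t - 1 = -(1 - t) by ring, Even.neg_pow (even_two_mul k)]
    have h2 : (1 - t) ≤ Real.exp (-t) := by
      have := Real.add_one_le_exp (-t); linarith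
    have h3 : (1 - t) ^ (2 * k) ≤ (Real.exp (-t)) ^ (2 * k) :=
      pow_le_pow_left₀ (by linarith) h2 _
    have h4 : (Real.exp (-t)) ^ (2 * k) = Real.exp (-(2 * k * t)) := by
      rw [← Real.exp_nat_mul]; congr 1; push_cast; ring
    set u : ℝ := 2 * k * t with hu
    have hupos : 0 < u := by positivity
    have h5 : u ≤ Real.exp u := by
      have := Real.add_one_le_exp u; linarith
    have h6 : u * Real.exp (-u) ≤ 1 := by
      have hepos : 0 < Real.exp (-u) := Real.exp_pos _
      have := mul_le_mul_of_nonneg_right h5 hepos.le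
      rwa [← Real.exp_add, add_neg_cancel, Real.exp_zero] at this
    have h7 : (t - 1) ^ (2 * k) * t ≤ Real.exp (-u) * t := by
      rw [h1]
      exact mul_le_mul_of_nonneg_right (h3.trans_eq h4) h.le
    have h8 : Real.exp (-u) * t ≤ 1 / (2 * k) := by
      rw [le_div_iff₀ hkpos]
      calc Real.exp (-u) * t * (2 * k) = u * Real.exp (-u) := by rw [hu]; ring
        _ ≤ 1 := h6
    linarith

private lemma schw_bound_neg (k : ℕ) {δ t : ℝ} (hδ : 0 < δ) (ht : t ≤ -δ) :
    (t - 1) ^ (2 * k) * t ≤ -(δ * (1 + δ) ^ (2 * k)) := by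
  have h1 : (t - 1) ^ (2 * k) = (1 - t) ^ (2 * k) := by
    rw [show t - 1 = -(1 - t) by ring, Even.neg_pow (even_two_mul k)]
  have h2 : (1 + δ) ^ (2 * k) ≤ (1 - t) ^ (2 * k) :=
    pow_le_pow_left₀ (by linarith) (by linarith) _
  have htneg : t ≤ 0 := by linarith
  calc (t - 1) ^ (2 * k) * t = (1 - t) ^ (2 * k) * t := by rw [h1]
    _ ≤ (1 + δ) ^ (2 * k) * t := mul_le_mul_of_nonpos_right h2 htneg
    _ ≤ (1 + δ) ^ (2 * k) * (-δ) :=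
        mul_le_mul_of_nonneg_left ht (by positivity)
    _ = -(δ * (1 + δ) ^ (2 * k)) := by ring

/-- **Rational version of Schweighofer's key lemma.** Let `g₁, …, g_s ∈ ℚ[X]`,
let `C ⊆ ℝⁿ` be compact with `K_S ⊆ C` and `gᵢ ≤ 1` on `C` for all `i`, and let
`f ∈ ℚ[X]` be strictly positive on `K_S`.  Then there are a rational `λ > 0` and
`k ∈ ℕ` such that `f - λ Σᵢ (gᵢ - 1)^{2k} gᵢ > 0` on `C`. -/
theorem schweighofer_key_lemma_rational (n s : ℕ)
    (g : Fin s → MvPolynomial (Fin n) ℚ) (C : Set (Fin n → ℝ))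
    (hC : IsCompact C)
    (hKC : {x : Fin n → ℝ | ∀ i, 0 ≤ aeval x (g i)} ⊆ C)
    (hg1 : ∀ x ∈ C, ∀ i, aeval x (g i) ≤ 1)
    (f : MvPolynomial (Fin n) ℚ)
    (hf : ∀ x : Fin n → ℝ, (∀ i, 0 ≤ aeval x (g i)) → 0 < aeval x f) :
    ∃ (lam : ℚ) (k : ℕ), 0 < lam ∧ ∀ x ∈ C,
      0 < aeval x f - (lam : ℝ) * ∑ i, (aeval x (g i) - 1) ^ (2 * k) * aeval x (g i) := by
  rcases C.eq_empty_or_nonempty with rfl | hCne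
  · exact ⟨1, 0, one_pos, by simp⟩
  have contF : Continuous fun x : Fin n → ℝ => (aeval x f : ℝ) := schw_cont f
  have contG : ∀ i, Continuous fun x : Fin n → ℝ => (aeval x (g i) : ℝ) :=
    fun i => schw_cont (g i)
  -- Step A: uniform positivity on a relaxed set
  obtain ⟨m, hm⟩ : ∃ m : ℕ, ∀ x ∈ C,
      (∀ i, -(1 / (m + 1 : ℝ)) ≤ aeval x (g i)) → 1 / (m + 1 : ℝ) < aeval x f := by
    by_contra hcon
    push_neg at hcon
    set D : ℕ → Set (Fin n → ℝ) := fun m =>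
      {x | x ∈ C ∧ (∀ i, -(1 / (m + 1 : ℝ)) ≤ aeval x (g i)) ∧
        aeval x f ≤ 1 / (m + 1 : ℝ)} with hD
    have hDclosed : ∀ m, IsClosed (D m) := by
      intro m
      have h1 : IsClosed {x : Fin n → ℝ | ∀ i, -(1 / (m + 1 : ℝ)) ≤ aeval x (g i)} := by
        have : {x : Fin n → ℝ | ∀ i, -(1 / (m + 1 : ℝ)) ≤ aeval x (g i)}
            = ⋂ i, {x | -(1 / (m + 1 : ℝ)) ≤ aeval x (g i)} := by
          ext x; simp [Set.mem_iInter]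
        rw [this]
        exact isClosed_iInter fun i => isClosed_le continuous_const (contG i)
      have h2 : IsClosed {x : Fin n → ℝ | aeval x f ≤ 1 / (m + 1 : ℝ)} :=
        isClosed_le contF continuous_const
      have : D m = C ∩ ({x | ∀ i, -(1 / (m + 1 : ℝ)) ≤ aeval x (g i)}
          ∩ {x | aeval x f ≤ 1 / (m + 1 : ℝ)}) := by
        ext x
        simp only [hD, Set.mem_setOf_eq, Set.mem_inter_iff, and_assoc]
      rw [this]
      exact hC.isClosed.inter (h1.inter h2)
    have hDsub : ∀ m, D (m + 1) ⊆ D m := by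
      intro m x hx
      obtain ⟨hxC, hxg, hxf⟩ := hx
      have hle : (1 : ℝ) / ((m + 1 : ℕ) + 1) ≤ 1 / ((m : ℝ) + 1) := by
        apply one_div_le_one_div_of_le
        · positivity
        · push_cast; linarith
      refine ⟨hxC, fun i => le_trans (by linarith) (hxg i), le_trans hxf hle⟩
    have hDne : ∀ m, (D m).Nonempty := by
      intro m
      obtain ⟨x, hxC, hxg, hxf⟩ := hcon m
      exact ⟨x, hxC, hxg, hxf⟩
    have hD0 : IsCompact (D 0) :=
      hC.of_isClosed_subset (hDclosed 0) fun x hx => hx.1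
    obtain ⟨x, hx⟩ := IsCompact.nonempty_iInter_of_sequence_nonempty_isCompact_isClosed
      D hDsub hDne hD0 hDclosed
    simp only [Set.mem_iInter] at hx
    have hxg : ∀ i, 0 ≤ aeval x (g i) := by
      intro i
      by_contra hneg
      push_neg at hneg
      obtain ⟨m, hm'⟩ := exists_nat_one_div_lt (show (0:ℝ) < -(aeval x (g i)) by linarith)
      have := (hx m).2.1 i
      linarith
    have hxf : aeval x f ≤ 0 := by
      by_contra hpos
      push_neg at hpos
      obtain ⟨m, hm'⟩ := exists_nat_one_div_lt hpos
      have := (hx m).2.2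
      linarith
    exact absurd (hf x hxg) (by linarith)
  set δ : ℝ := 1 / (m + 1 : ℝ) with hδdef
  have hδpos : 0 < δ := by positivity
  -- Step B: lower bound for f on C
  obtain ⟨z, hzC, hz⟩ := hC.exists_isMinOn hCne contF.continuousOn
  set B : ℝ := aeval z f with hB
  have hBle : ∀ x ∈ C, B ≤ aeval x f := fun x hx => hz hx
  -- Step C: choose k
  obtain ⟨N₁, hN₁⟩ := exists_nat_gt ((s : ℝ) / δ)
  obtain ⟨N₂, hN₂⟩ := pow_unbounded_of_one_lt (((s : ℝ) - B) / δ) (by linarith : (1:ℝ) < 1 + δ)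
  set k : ℕ := max 1 (max N₁ N₂) with hk
  have hk1 : 1 ≤ k := le_max_left _ _
  have hkN₁ : N₁ ≤ k := le_trans (le_max_left _ _) (le_max_right _ _)
  have hkN₂ : N₂ ≤ 2 * k := by
    have h : N₂ ≤ k := le_trans (le_max_right _ _) (le_max_right _ _)
    omega
  refine ⟨1, k, one_pos, fun x hxC => ?_⟩
  have hg1x : ∀ i, aeval x (g i) ≤ 1 := hg1 x hxC
  simp only [Rat.cast_one, one_mul]
  by_cases hcase : ∀ i, -δ ≤ aeval x (g i)
  · -- near K_S: f is large, the sum is small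
    have hfx : δ < aeval x f := hm x hxC hcase
    have hsum : ∑ i, (aeval x (g i) - 1) ^ (2 * k) * aeval x (g i)
        ≤ (s : ℝ) * (1 / (2 * k)) := by
      calc ∑ i, (aeval x (g i) - 1) ^ (2 * k) * aeval x (g i)
          ≤ ∑ _i : Fin s, (1 / (2 * (k:ℝ))) :=
            Finset.sum_le_sum fun i _ => schw_bound_small hk1 (hg1x i)
        _ = (s : ℝ) * (1 / (2 * k)) := by simp [mul_comm]
    have hsmall : (s : ℝ) * (1 / (2 * k)) < δ := by
      have hkpos : (0:ℝ) < 2 * k := by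
        have : (1:ℝ) ≤ (k:ℝ) := by exact_mod_cast hk1
        linarith
      rw [mul_one_div, div_lt_iff₀ hkpos]
      have h1 : (s : ℝ) < N₁ * δ := by
        rw [div_lt_iff₀ hδpos] at hN₁; linarith
      have h2 : (N₁ : ℝ) ≤ k := by exact_mod_cast hkN₁
      nlinarith [hδpos, h1, h2]
    linarith
  · -- far from K_S: the negative term dominates
    push_neg at hcase
    obtain ⟨j, hj⟩ := hcase
    have hTj : (aeval x (g j) - 1) ^ (2 * k) * aeval x (g j)
        ≤ -(δ * (1 + δ) ^ (2 * k)) := schw_bound_neg k hδpos hj.le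
    have hrest : ∑ i ∈ Finset.univ.erase j,
        (aeval x (g i) - 1) ^ (2 * k) * aeval x (g i) ≤ (s : ℝ) := by
      calc ∑ i ∈ Finset.univ.erase j,
            (aeval x (g i) - 1) ^ (2 * k) * aeval x (g i)
          ≤ ∑ _i ∈ Finset.univ.erase j, (1:ℝ) :=
            Finset.sum_le_sum fun i _ => schw_bound_one k (hg1x i)
        _ = ((Finset.univ.erase j).card : ℝ) := by simp
        _ ≤ (s : ℝ) := by
            have := Finset.card_erase_le (a := j) (s := (Finset.univ : Finset (Fin s)))
            simp only [Finset.card_univ, Fintype.card_fin] at this ⊢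
            exact_mod_cast this
    have hsplit : ∑ i, (aeval x (g i) - 1) ^ (2 * k) * aeval x (g i)
        = (∑ i ∈ Finset.univ.erase j,
            (aeval x (g i) - 1) ^ (2 * k) * aeval x (g i))
          + (aeval x (g j) - 1) ^ (2 * k) * aeval x (g j) :=
      (Finset.sum_erase_add _ _ (Finset.mem_univ j)).symm
    have hpow : ((s : ℝ) - B) / δ < (1 + δ) ^ (2 * k) := by
      calc ((s : ℝ) - B) / δ < (1 + δ) ^ N₂ := hN₂
        _ ≤ (1 + δ) ^ (2 * k) := pow_le_pow_right₀ (by linarith) hkN₂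
    have hpow' : (s : ℝ) - B < δ * (1 + δ) ^ (2 * k) := by
      rw [div_lt_iff₀ hδpos] at hpow; linarith
    have hBx : B ≤ aeval x f := hBle x hxC
    rw [hsplit]
    linarith
end

section
/- Let N ∈ ℕ and let φ : ℚ[Y₁, …, Y_{2n}] → ℚ[X₁, …, Xₙ] be the ℚ-algebra homomorphism determined by φ(Y_i) = (N + 1/4) + X_i and φ(Y_{n+i}) = (N + 1/4) − X_i for i = 1, …, n. If G ∈ ℚ[Y₁, …, Y_{2n}] has only nonnegative coefficients, then φ(G) lies in the quadratic module in ℚ[X₁, …, Xₙ] generated by N − (X₁² + ⋯ + Xₙ²); that is, φ(G) = σ₀ + σ·(N − Σ_j X_j²) for some sums of squares σ₀, σ of polynomials with rational coefficients. -/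
/-!
Each generator `N + 1/4 ± Xᵢ` of the image of `φ` is `(Xᵢ ± 1/2)² + ∑_{j ≠ i} Xⱼ² + g` with
`g = N - ∑ⱼ Xⱼ²`, so it lies in the quadratic module of `g`. That module contains the
nonnegative rationals and, having a single generator, is closed under sums and products; hence it
contains `φ(G)`, a combination of monomials in the generators with nonnegative coefficients.
-/

open MvPolynomial Finset

theorem IsSumSq.isSOS {R : Type*} [CommRing R] {f : R} (h : IsSumSq f) : IsSOS f := by
  induction h with
  | zero => exact ⟨0, Fin.elim0, by simp⟩
  | sq_add a _ ih =>
    obtain ⟨k, p, rfl⟩ := ih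
    exact ⟨k + 1, Fin.cons a p, by simp [Fin.sum_univ_succ, sq]⟩

theorem Rat.isSumSq_algebraMap_of_nonneg {A : Type*} [CommSemiring A] [Algebra ℚ A] {q : ℚ}
    (hq : 0 ≤ q) : IsSumSq (algebraMap ℚ A q) := by
  have hq' : q = (q.num.toNat * q.den : ℕ) * ((q.den : ℚ)⁻¹ * (q.den : ℚ)⁻¹) := by
    have hden : (q.den : ℚ) ≠ 0 := by exact_mod_cast q.den_ne_zero
    have hnum : (q.num.toNat : ℚ) = q.num := by
      exact_mod_cast Int.toNat_of_nonneg (Rat.num_nonneg.mpr hq)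
    push_cast
    rw [hnum]
    field_simp
    exact Rat.mul_den_eq_num q
  rw [hq', map_mul, map_natCast, map_mul]
  exact (IsSumSq.natCast _).mul (.mul_self _)

section QuadraticModule

variable {A : Type*} [CommRing A]

/-- With a single generator `g` the quadratic module `ΣA² + ΣA² · g` is closed under products,
since `(σ₁ g) (τ₁ g) = σ₁ τ₁ g²`; so it is a subsemiring. -/
def quadraticModule (g : A) : Subsemiring A where
  carrier := {f | ∃ σ₀ σ₁, IsSumSq σ₀ ∧ IsSumSq σ₁ ∧ f = σ₀ + σ₁ * g}
  zero_mem' := ⟨0, 0, .zero, .zero, by ring⟩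
  one_mem' := ⟨1, 0, .one, .zero, by ring⟩
  add_mem' := by
    rintro _ _ ⟨σ₀, σ₁, hσ₀, hσ₁, rfl⟩ ⟨τ₀, τ₁, hτ₀, hτ₁, rfl⟩
    exact ⟨σ₀ + τ₀, σ₁ + τ₁, hσ₀.add hτ₀, hσ₁.add hτ₁, by ring⟩
  mul_mem' := by
    rintro _ _ ⟨σ₀, σ₁, hσ₀, hσ₁, rfl⟩ ⟨τ₀, τ₁, hτ₀, hτ₁, rfl⟩
    exact ⟨σ₀ * τ₀ + σ₁ * τ₁ * (g * g), σ₀ * τ₁ + σ₁ * τ₀,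
      (hσ₀.mul hτ₀).add ((hσ₁.mul hτ₁).mul (.mul_self g)),
      (hσ₀.mul hτ₁).add (hσ₁.mul hτ₀), by ring⟩

theorem IsSumSq.mem_quadraticModule {g f : A} (hf : IsSumSq f) : f ∈ quadraticModule g :=
  ⟨f, 0, hf, .zero, by ring⟩

theorem add_quarter_add_mem_quadraticModule [Algebra ℚ A] {ι : Type*} [DecidableEq ι]
    {s : Finset ι} {i : ι} (hi : i ∈ s) (c : A) (x : ι → A) :
    c + algebraMap ℚ A (1 / 4) + x i ∈ quadraticModule (c - ∑ j ∈ s, x j ^ 2) := by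
  refine ⟨(x i + algebraMap ℚ A (1 / 2)) ^ 2 + ∑ j ∈ s.erase i, x j ^ 2, 1,
    (IsSquare.sq _).isSumSq.add (.sum_sq _ _), .one, ?_⟩
  have hsq : algebraMap ℚ A (1 / 2) * algebraMap ℚ A (1 / 2) = algebraMap ℚ A (1 / 4) := by
    rw [← map_mul]; norm_num
  have htwice : 2 * algebraMap ℚ A (1 / 2) = 1 := by
    rw [← map_ofNat (algebraMap ℚ A) 2, ← map_mul]; norm_num
  rw [← add_sum_erase s _ hi]
  linear_combination (-1 : A) * hsq - x i * htwice

end QuadraticModule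

theorem MvPolynomial.aeval_mem_of_coeff_mem {σ R A : Type*} [CommSemiring R] [CommSemiring A]
    [Algebra R A] {S : Subsemiring A} {x : σ → A} {p : MvPolynomial σ R}
    (hcoeff : ∀ m, algebraMap R A (p.coeff m) ∈ S) (hx : ∀ i, x i ∈ S) : aeval x p ∈ S := by
  rw [aeval_def, eval₂_eq]
  exact sum_mem fun m _ ↦ mul_mem (hcoeff m) (prod_mem fun i _ ↦ pow_mem (hx i) _)

/-- Let `φ : ℚ[Y₁, …, Y_{2n}] → ℚ[X₁, …, Xₙ]` be the `ℚ`-algebra homomorphism with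
`φ(Yᵢ) = (N + 1/4) + Xᵢ` and `φ(Y_{n+i}) = (N + 1/4) - Xᵢ` (the first `n` variables
are indexed by `Sum.inl` and the last `n` by `Sum.inr`).  If
`G ∈ ℚ[Y₁, …, Y_{2n}]` has only nonnegative coefficients, then `φ(G)` lies in the
quadratic module generated in `ℚ[X₁, …, Xₙ]` by `N - (X₁² + ⋯ + Xₙ²)`:
`φ(G) = σ₀ + σ (N - Σⱼ Xⱼ²)` with `σ₀, σ` sums of squares of polynomials with
rational coefficients. -/
theorem image_of_nonneg_coeffs_in_quadratic_module (n N : ℕ)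
    (φ : MvPolynomial (Fin n ⊕ Fin n) ℚ →ₐ[ℚ] MvPolynomial (Fin n) ℚ)
    (hφ : ∀ i : Fin n,
      φ (X (Sum.inl i)) = C ((N : ℚ) + 1/4) + X i ∧
      φ (X (Sum.inr i)) = C ((N : ℚ) + 1/4) - X i)
    (G : MvPolynomial (Fin n ⊕ Fin n) ℚ)
    (hG : ∀ μ : Fin n ⊕ Fin n →₀ ℕ, 0 ≤ G.coeff μ) :
    ∃ σ₀ σ : MvPolynomial (Fin n) ℚ, IsSOS σ₀ ∧ IsSOS σ ∧
      φ G = σ₀ + σ * ((N : MvPolynomial (Fin n) ℚ) - ∑ j, X j ^ 2) := by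
  set g : MvPolynomial (Fin n) ℚ := (N : MvPolynomial (Fin n) ℚ) - ∑ j, X j ^ 2
  have hC : C ((N : ℚ) + 1 / 4) = (N : MvPolynomial (Fin n) ℚ) + algebraMap ℚ _ (1 / 4) := by
    rw [map_add, map_natCast, algebraMap_eq]
  have hvar : ∀ j, φ (X j) ∈ quadraticModule g := by
    rintro (i | i)
    · rw [(hφ i).1, hC]
      exact add_quarter_add_mem_quadraticModule (mem_univ i) _ _
    · have h := add_quarter_add_mem_quadraticModule (mem_univ i) (N : MvPolynomial (Fin n) ℚ) (-X)
      simp only [Pi.neg_apply, neg_sq] at h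
      rwa [(hφ i).2, hC, sub_eq_add_neg]
  have hφG : φ G ∈ quadraticModule g := by
    rw [aeval_unique φ]
    exact aeval_mem_of_coeff_mem
      (fun m ↦ (Rat.isSumSq_algebraMap_of_nonneg (hG m)).mem_quadraticModule) hvar
  obtain ⟨σ₀, σ₁, hσ₀, hσ₁, h⟩ := hφG
  exact ⟨σ₀, σ₁, hσ₀.isSOS, hσ₁.isSOS, h⟩
end
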